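/- Let x, h, H be positive integers with h ≤ H and H = o(x). Then the number of integers q with h < q ≤ H such that {H/q} − h/q < {x/q} ≤ {H/q} is ≪_ε x^ε h, where {y} denotes the fractional part of y. -/

import Mathlib

/-!
The condition on `q` says exactly that `x + a ≡ H (mod q)` for some `0 ≤ a < h`, so `q` divides
one of the `h` positive integers `x + a - H < x` (once `H < x`, which `H = o(x)` gives eventually).
The count is therefore at most `∑_{a < h} d(x + a - H) ≤ h · K_ε x ^ ε` by the divisor bound
`d(n) ≤ K_ε n ^ ε`.
-/

open Finset Filter Asymptotics

lemma add_one_le_pow_of_two_le {y : ℝ} (hy : 2 ≤ y) (e : ℕ) : (e + 1 : ℝ) ≤ y ^ e :=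
  calc (e + 1 : ℝ) ≤ 2 ^ e := by exact_mod_cast e.lt_two_pow_self
    _ ≤ y ^ e := pow_le_pow_left₀ zero_le_two hy e

lemma add_one_le_mul_pow {δ y : ℝ} (hδ : 0 < δ) (hy : 1 + δ ≤ y) (e : ℕ) :
    (e + 1 : ℝ) ≤ (1 + δ⁻¹) * y ^ e := by
  have hbernoulli : 1 + e * δ ≤ y ^ e :=
    (one_add_mul_le_pow (by linarith) e).trans (pow_le_pow_left₀ (by linarith) hy e)
  have hone : 1 ≤ y ^ e := one_le_pow₀ (by linarith)
  have he : (e : ℝ) ≤ δ⁻¹ * y ^ e := by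
    rw [le_inv_mul_iff₀ hδ]
    linarith
  linarith

theorem Nat.cast_rpow_eq_prod_primeFactors {n : ℕ} (hn : n ≠ 0) (s : ℝ) :
    (n : ℝ) ^ s = ∏ p ∈ n.primeFactors, ((p : ℝ) ^ s) ^ n.factorization p := by
  conv_lhs => rw [Nat.prod_primeFactors_pow_factorization hn]
  push_cast
  rw [← Real.finsetProd_rpow _ _ fun p _ => by positivity]
  exact prod_congr rfl fun p _ => (Real.rpow_pow_comm p.cast_nonneg s _).symm

/-- `d(n) = ∏ (e_p + 1)`, and `e + 1 ≤ (p ^ ε) ^ e` as soon as `p ^ ε ≥ 2`; each of the fewer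
than `⌈2 ^ ε⁻¹⌉` primes with `p ^ ε < 2` costs at most the factor `1 + (2 ^ ε - 1)⁻¹`. -/
theorem Nat.exists_card_divisors_le_mul_rpow {ε : ℝ} (hε : 0 < ε) :
    ∃ K : ℝ, 0 ≤ K ∧ ∀ n : ℕ, n ≠ 0 → (#n.divisors : ℝ) ≤ K * (n : ℝ) ^ ε := by
  set C := 1 + ((2 : ℝ) ^ ε - 1)⁻¹
  set P := ⌈(2 : ℝ) ^ ε⁻¹⌉₊
  have hδ : 0 < (2 : ℝ) ^ ε - 1 := sub_pos.2 (Real.one_lt_rpow one_lt_two hε)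
  have hC : 1 ≤ C := le_add_of_nonneg_right (inv_nonneg.2 hδ.le)
  refine ⟨C ^ P, pow_nonneg (zero_le_one.trans hC) P, fun n hn => ?_⟩
  have hprime : ∀ p ∈ n.primeFactors, (n.factorization p + 1 : ℝ) ≤
      (if p < P then C else 1) * ((p : ℝ) ^ ε) ^ n.factorization p := by
    intro p hp
    have hp2 : (2 : ℝ) ≤ p := by exact_mod_cast (Nat.prime_of_mem_primeFactors hp).two_le
    split_ifs with hpP
    · refine add_one_le_mul_pow hδ ?_ _
      rw [add_sub_cancel]
      exact Real.rpow_le_rpow zero_le_two hp2 hε.le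
    · rw [one_mul]
      refine add_one_le_pow_of_two_le ?_ _
      refine (Real.rpow_inv_le_iff_of_pos zero_le_two p.cast_nonneg hε).1 ?_
      exact (Nat.le_ceil _).trans (by exact_mod_cast not_lt.1 hpP)
  have hsmall : ∏ p ∈ n.primeFactors, (if p < P then C else 1) ≤ C ^ P := by
    rw [prod_ite, prod_const, prod_const_one, mul_one]
    exact pow_le_pow_right₀ hC <| (card_le_card fun p hp => mem_range.2 (mem_filter.1 hp).2).trans
      (card_range P).le
  calc (#n.divisors : ℝ) = ∏ p ∈ n.primeFactors, (n.factorization p + 1 : ℝ) := by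
        rw [Nat.card_divisors hn]; push_cast; rfl
    _ ≤ ∏ p ∈ n.primeFactors, (if p < P then C else 1) * ((p : ℝ) ^ ε) ^ n.factorization p :=
        prod_le_prod (fun _ _ => by positivity) hprime
    _ ≤ C ^ P * (n : ℝ) ^ ε := by
        rw [prod_mul_distrib, ← Nat.cast_rpow_eq_prod_primeFactors hn]
        gcongr

lemma fract_div_sub_lt_and_le_fract_div_iff_mod {h H x q : ℕ} (hq : 0 < q) :
    (Int.fract ((H : ℝ) / q) - (h : ℝ) / q < Int.fract ((x : ℝ) / q) ∧
        Int.fract ((x : ℝ) / q) ≤ Int.fract ((H : ℝ) / q)) ↔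
      x % q ≤ H % q ∧ H % q < x % q + h := by
  have hq' : (0 : ℝ) < q := Nat.cast_pos.2 hq
  simp only [Int.fract_div_natCast_eq_div_natCast_mod, ← sub_div, div_lt_div_iff_of_pos_right hq',
    div_le_div_iff_of_pos_right hq', sub_lt_iff_lt_add]
  norm_cast
  omega

lemma exists_lt_dvd_add_sub_of_mod {h H x q : ℕ} (hHx : H ≤ x) (hle : x % q ≤ H % q)
    (hlt : H % q < x % q + h) : ∃ a < h, q ∣ x + a - H := by
  refine ⟨H % q - x % q, by omega, (Nat.modEq_iff_dvd' (by omega)).1 ?_⟩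
  calc H % q = (x % q + (H % q - x % q)) % q := by rw [Nat.add_sub_cancel' hle, Nat.mod_mod]
    _ = (x + (H % q - x % q)) % q := Nat.mod_add_mod _ _ _

theorem card_filter_fract_le_sum_card_divisors {h H x : ℕ} (hHx : H < x) :
    #((Ioc h H).filter fun q : ℕ =>
        Int.fract ((H : ℝ) / q) - (h : ℝ) / q < Int.fract ((x : ℝ) / q) ∧
          Int.fract ((x : ℝ) / q) ≤ Int.fract ((H : ℝ) / q)) ≤
      ∑ a ∈ range h, #(x + a - H).divisors := by
  refine (card_le_card fun q hq => ?_).trans card_biUnion_le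
  obtain ⟨hqI, hcond⟩ := mem_filter.1 hq
  have hq : 0 < q := (Nat.zero_le h).trans_lt (mem_Ioc.1 hqI).1
  obtain ⟨hle, hlt⟩ := (fract_div_sub_lt_and_le_fract_div_iff_mod hq).1 hcond
  obtain ⟨a, ha, hdvd⟩ := exists_lt_dvd_add_sub_of_mod hHx.le hle hlt
  exact mem_biUnion.2 ⟨a, mem_range.2 ha, Nat.mem_divisors.2 ⟨hdvd, by omega⟩⟩

theorem count_fract_near_H_general
    (h H x : ℕ → ℕ) (hx : ∀ i, 0 < x i)
    (hhH : ∀ i, h i ≤ H i)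
    (hHx : (fun i => (H i : ℝ)) =o[atTop] (fun i => (x i : ℝ)))
    (ε : ℝ) (hε : 0 < ε) :
    (fun i =>
        (((Finset.Ioc (h i) (H i)).filter
            (fun q : ℕ =>
              Int.fract ((H i : ℝ) / (q : ℝ)) - (h i : ℝ) / (q : ℝ)
                  < Int.fract ((x i : ℝ) / (q : ℝ)) ∧
                Int.fract ((x i : ℝ) / (q : ℝ)) ≤ Int.fract ((H i : ℝ) / (q : ℝ)))).card : ℝ))
      =O[atTop] (fun i => (x i : ℝ) ^ ε * (h i : ℝ)) := by
  have hHlt : ∀ᶠ i in atTop, H i < x i := by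
    filter_upwards [hHx.bound one_half_pos] with i hi
    have : (H i : ℝ) < x i := by
      simp only [Real.norm_natCast] at hi
      linarith [(Nat.cast_pos (α := ℝ)).2 (hx i)]
    exact_mod_cast this
  obtain ⟨K, hK, hdivisors⟩ := Nat.exists_card_divisors_le_mul_rpow hε
  refine IsBigO.of_bound K ?_
  filter_upwards [hHlt] with i hi
  rw [Real.norm_natCast, Real.norm_of_nonneg (by positivity)]
  calc _ ≤ ∑ a ∈ range (h i), (#(x i + a - H i).divisors : ℝ) := by
        exact_mod_cast card_filter_fract_le_sum_card_divisors hi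
    _ ≤ ∑ a ∈ range (h i), K * (x i : ℝ) ^ ε := by
        refine sum_le_sum fun a ha => (hdivisors _ ?_).trans ?_
        · have := mem_range.1 ha; omega
        · have := mem_range.1 ha
          have := hhH i
          gcongr
          omega
    _ = _ := by rw [sum_const, card_range, nsmul_eq_mul]; ring

/-- The number of `h < q ≤ H` with `{H/q} - h/q < {x/q} ≤ {H/q}` is `≪_ε x^ε h`. -/
theorem count_fract_near_H
    (h H x : ℕ → ℕ) (hh : ∀ i, 0 < h i) (hx : ∀ i, 0 < x i)
    (hhH : ∀ i, h i ≤ H i)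
    (hHx : (fun i => (H i : ℝ)) =o[atTop] (fun i => (x i : ℝ)))
    (ε : ℝ) (hε : 0 < ε) :
    (fun i =>
        (((Finset.Ioc (h i) (H i)).filter
            (fun q : ℕ =>
              Int.fract ((H i : ℝ) / (q : ℝ)) - (h i : ℝ) / (q : ℝ)
                  < Int.fract ((x i : ℝ) / (q : ℝ)) ∧
                Int.fract ((x i : ℝ) / (q : ℝ)) ≤ Int.fract ((H i : ℝ) / (q : ℝ)))).card : ℝ))
      =O[atTop] (fun i => (x i : ℝ) ^ ε * (h i : ℝ)) :=
  count_fract_near_H_general h H x hx hhH hHx ε hε
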